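/- Let $R$ be a commutative ring, $n \geq 3$, and $I_1, \dots, I_n, V_1, \dots, V_n, x \in R$. Let $\mathcal{L}$ denote the tridiagonal $n \times n$ matrix with diagonal $(I_1 + V_n - x, I_2 + V_1 - x, \dots, I_n + V_{n-1} - x)$, superdiagonal all $1$, and subdiagonal $(I_1 V_1, \dots, I_{n-1} V_{n-1})$ (no corner entries). Denote by ${}^k\mathcal{L}_l$ the submatrix obtained by deleting the first $k$ and last $l$ rows and columns. Then $\det({}^1\mathcal{L}_1) \det(\mathcal{L}_2) - \det(\mathcal{L}_1) \det({}^1\mathcal{L}_2) = I_1 V_1 I_2 V_2 \cdots I_{n-2} V_{n-2}$. -/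

import Mathlib

/-!
Write `Dₘ` for the determinant of the leading `m × m` block of a tridiagonal matrix with diagonal
`d`, superdiagonal `1` and subdiagonal `c`, and `D'ₘ` for the same with the index shifted by one.
Laplace expansion along the last row gives the continuant recursion
`Dₘ₊₂ = dₘ₊₁ Dₘ₊₁ - cₘ Dₘ`, and `D'ₘ₋₁` satisfies the same recursion in `m`. Hence the Casoratian
`D'ₘ₊₁ Dₘ₊₁ - Dₘ₊₂ D'ₘ` gets multiplied by `cₘ₊₁` at each step, so it equals `c₀ ⋯ cₘ`. The minors
`¹𝓛₁, 𝓛₂, 𝓛₁, ¹𝓛₂` of `𝓛` are windows of consecutive indices, i.e. such `Dₘ` and `D'ₘ`.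
-/

/-- The tridiagonal `n × n` matrix `𝓛` with diagonal
`(I₁+Vₙ−x, I₂+V₁−x, …, Iₙ+Vₙ₋₁−x)`, superdiagonal all `1`, and subdiagonal
`(I₁V₁, …, Iₙ₋₁Vₙ₋₁)` (no corner entries). -/
def todaTri {R : Type*} [CommRing R] (n : ℕ) (I V : ℕ → R) (x : R) :
    Matrix (Fin n) (Fin n) R :=
  Matrix.of fun i j =>
    if (i : ℕ) = j then I ((i : ℕ) + 1) + V (if (i : ℕ) = 0 then n else (i : ℕ)) - x
    else if (i : ℕ) + 1 = j then 1
    else if (j : ℕ) + 1 = i then I ((j : ℕ) + 1) * V ((j : ℕ) + 1)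
    else 0

section Tridiagonal

variable {R : Type*} [CommRing R]

theorem Matrix.det_succ_eq_corner_mul_det_of_col_last {m : ℕ}
    (M : Matrix (Fin (m + 1)) (Fin (m + 1)) R)
    (h : ∀ i : Fin m, M i.castSucc (Fin.last m) = 0) :
    M.det = M (Fin.last m) (Fin.last m) * (M.submatrix Fin.castSucc Fin.castSucc).det := by
  rw [det_succ_column M (Fin.last m), Fin.sum_univ_castSucc]
  simp [h, Fin.succAbove_last, ← two_mul, pow_mul]

def tridiag (d c : ℕ → R) (m : ℕ) : Matrix (Fin m) (Fin m) R :=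
  Matrix.of fun i j =>
    if (i : ℕ) = j then d i
    else if (i : ℕ) + 1 = j then 1
    else if (j : ℕ) + 1 = i then c j
    else 0

def continuant (d c : ℕ → R) : ℕ → R
  | 0 => 1
  | 1 => d 0
  | m + 2 => d (m + 1) * continuant d c (m + 1) - c m * continuant d c m

theorem tridiag_submatrix {N m : ℕ} (d c : ℕ → R) (a : ℕ) {r s : Fin m → Fin N}
    (hr : ∀ k, (r k : ℕ) = k + a) (hs : ∀ k, (s k : ℕ) = k + a) :
    (tridiag d c N).submatrix r s = tridiag (fun i => d (i + a)) (fun i => c (i + a)) m := by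
  ext i j
  simp only [tridiag, Matrix.submatrix_apply, Matrix.of_apply, hr, hs]
  split_ifs <;> first | rfl | omega

theorem tridiag_apply_eq_zero (d c : ℕ → R) {m : ℕ} {i j : Fin m} (h₁ : (i : ℕ) ≠ j)
    (h₂ : (i : ℕ) + 1 ≠ j) (h₃ : (j : ℕ) + 1 ≠ i) : tridiag d c m i j = 0 := by
  simp [tridiag, h₁, h₂, h₃]

theorem det_tridiag_add_two (d c : ℕ → R) (m : ℕ) :
    (tridiag d c (m + 2)).det =
      d (m + 1) * (tridiag d c (m + 1)).det - c m * (tridiag d c m).det := by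
  set A := tridiag d c (m + 2)
  have hdiag : A.submatrix Fin.castSucc Fin.castSucc = tridiag d c (m + 1) := by
    simpa using tridiag_submatrix d c 0 (r := Fin.castSucc) (s := Fin.castSucc) (by simp) (by simp)
  have hminor : (A.submatrix Fin.castSucc (Fin.last m).castSucc.succAbove).det =
      (tridiag d c m).det := by
    rw [Matrix.det_succ_eq_corner_mul_det_of_col_last]
    · have hsub : A.submatrix (Fin.castSucc ∘ Fin.castSucc)
          ((Fin.last m).castSucc.succAbove ∘ Fin.castSucc) = tridiag d c m := by
        simpa using tridiag_submatrix d c 0 (by simp) (by simp [Fin.succAbove, Fin.lt_def])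
      have hone : A (Fin.last m).castSucc (Fin.last (m + 1)) = 1 := by simp [A, tridiag]
      simp [hsub, hone]
    · intro i
      simpa using tridiag_apply_eq_zero d c (by simp; omega) (by simp; omega) (by simp; omega)
  have hzero : ∀ j : Fin m, A (Fin.last (m + 1)) j.castSucc.castSucc = 0 := fun j =>
    tridiag_apply_eq_zero d c (by simp; omega) (by simp; omega) (by simp; omega)
  have hlast_prev : A (Fin.last (m + 1)) (Fin.last m).castSucc = c m := by
    simp [A, tridiag]; omega
  have hlast_last : A (Fin.last (m + 1)) (Fin.last (m + 1)) = d (m + 1) := by simp [A, tridiag]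
  rw [Matrix.det_succ_row A (Fin.last (m + 1)), Fin.sum_univ_castSucc, Fin.sum_univ_castSucc]
  simp [Fin.succAbove_last, hdiag, hminor, hzero, hlast_prev, hlast_last]
  ring

theorem det_tridiag (d c : ℕ → R) : ∀ m, (tridiag d c m).det = continuant d c m
  | 0 => by simp [continuant]
  | 1 => by simp [tridiag, continuant]
  | m + 2 => by rw [det_tridiag_add_two, det_tridiag d c (m + 1), det_tridiag d c m, continuant]

theorem det_tridiag_submatrix {N m : ℕ} (d c : ℕ → R) (a : ℕ) {r : Fin m → Fin N}
    (hr : ∀ k, (r k : ℕ) = k + a) :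
    ((tridiag d c N).submatrix r r).det =
      continuant (fun i => d (i + a)) (fun i => c (i + a)) m := by
  rw [tridiag_submatrix d c a hr hr, det_tridiag]

theorem continuant_shift_mul_sub (d c : ℕ → R) (m : ℕ) :
    continuant (fun i => d (i + 1)) (fun i => c (i + 1)) (m + 1) * continuant d c (m + 1) -
        continuant d c (m + 2) * continuant (fun i => d (i + 1)) (fun i => c (i + 1)) m =
      ∏ i ∈ Finset.range (m + 1), c i := by
  induction m with
  | zero => simp [continuant]
  | succ m ih =>
    rw [Finset.prod_range_succ, ← ih]
    simp only [continuant]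
    ring

end Tridiagonal

/-- Lemma 2.10 of the paper (`keylemma2`):
`det(¹𝓛₁) det(𝓛₂) − det(𝓛₁) det(¹𝓛₂) = I₁V₁ I₂V₂ ⋯ Iₙ₋₂Vₙ₋₂`, where `ᵏ𝓛ₗ` deletes
the first `k` and last `l` rows and columns of `𝓛`. -/
theorem stmt_14 {R : Type*} [CommRing R] (n : ℕ) (hn : 3 ≤ n) (I V : ℕ → R) (x : R) :
    ((todaTri n I V x).submatrix
        (fun k : Fin (n - 2) => (⟨(k : ℕ) + 1, by have := k.isLt; omega⟩ : Fin n))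
        (fun k : Fin (n - 2) => (⟨(k : ℕ) + 1, by have := k.isLt; omega⟩ : Fin n))).det *
    ((todaTri n I V x).submatrix
        (fun k : Fin (n - 2) => (⟨(k : ℕ), by have := k.isLt; omega⟩ : Fin n))
        (fun k : Fin (n - 2) => (⟨(k : ℕ), by have := k.isLt; omega⟩ : Fin n))).det -
    ((todaTri n I V x).submatrix
        (fun k : Fin (n - 1) => (⟨(k : ℕ), by have := k.isLt; omega⟩ : Fin n))
        (fun k : Fin (n - 1) => (⟨(k : ℕ), by have := k.isLt; omega⟩ : Fin n))).det *
    ((todaTri n I V x).submatrix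
        (fun k : Fin (n - 3) => (⟨(k : ℕ) + 1, by have := k.isLt; omega⟩ : Fin n))
        (fun k : Fin (n - 3) => (⟨(k : ℕ) + 1, by have := k.isLt; omega⟩ : Fin n))).det =
    ∏ i ∈ Finset.Icc 1 (n - 2), I i * V i := by
  set d : ℕ → R := fun i => I (i + 1) + V (if i = 0 then n else i) - x
  set c : ℕ → R := fun i => I (i + 1) * V (i + 1)
  have htoda : todaTri n I V x = tridiag d c n := rfl
  rw [htoda, det_tridiag_submatrix (N := n) (m := n - 2) d c 1 (fun _ => rfl),
    det_tridiag_submatrix (N := n) (m := n - 2) d c 0 (fun _ => rfl),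
    det_tridiag_submatrix (N := n) (m := n - 1) d c 0 (fun _ => rfl),
    det_tridiag_submatrix (N := n) (m := n - 3) d c 1 (fun _ => rfl)]
  obtain ⟨m, hm2, hm1, hm3⟩ : ∃ m, n - 2 = m + 1 ∧ n - 1 = m + 2 ∧ n - 3 = m :=
    ⟨n - 3, by omega, by omega, rfl⟩
  have hprod : ∏ i ∈ Finset.range (m + 1), I (i + 1) * V (i + 1) =
      ∏ i ∈ Finset.Icc 1 (m + 1), I i * V i := by
    rw [Finset.range_eq_Ico, Finset.prod_Ico_add' (fun i => I i * V i), zero_add,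
      Finset.Ico_add_one_right_eq_Icc]
  rw [hm2, hm1, hm3, ← hprod]
  exact continuant_shift_mul_sub d c m
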